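/- Let H be a Hilbert space, f ∈ H, and suppose f admits a cluster expansion into components g^1, …, g^N with the orthogonality properties of correlation functions: then ‖f‖² = ∑_{m=1}^{N} C(N-1, m-1) ‖g^m‖². Concretely: let f_N ∈ L²((𝕋^d)^N) be symmetric in its last N-1 variables, and define g_N^m via g_N^m(x_1,…,x_m) = ∑_{n=1}^{m} (-1)^{m-n} ∑_{σ ∈ P_{n-1}^{m-1}} f_N^n(x_1, x_σ) where f_N^m is the m-th marginal of f_N; assuming each g_N^m integrates to zero in each of its last m-1 variables, one has ∫_{(𝕋^d)^N} |f_N|² = ∑_{m=1}^{N} C(N-1, m-1) ∫_{(𝕋^d)^m} |g_N^m|². -/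

import Mathlib

open MeasureTheory

/-- The `d`-dimensional torus `𝕋^d`. -/
abbrev Torus (d : ℕ) := Fin d → AddCircle (1 : ℝ)

/-- Glue a tuple of the first `m` variables with a tuple of the remaining `N - m`
variables into a point of the `N`-fold product. -/
def glueVars {X : Type*} (N m : ℕ) (hm : m ≤ N)
    (y : Fin m → X) (z : Fin (N - m) → X) : Fin N → X :=
  fun i =>
    if h : (i : ℕ) < m then y ⟨i, h⟩
    else z ⟨(i : ℕ) - m, by have := i.isLt; omega⟩

/-- Given `y : Fin (m+1) → X` and a subset `σ` of indices (not containing `0`),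
`selVars y σ` is the tuple `(y 0, y_σ)` where the elements of `σ` are taken in
increasing order. -/
def selVars {X : Type*} {m n : ℕ} (y : Fin (m + 1) → X)
    (σ : Finset (Fin (m + 1))) : Fin (n + 1) → X :=
  fun j => y ((Finset.sort (insert 0 σ) (· ≤ ·)).getD (j : ℕ) 0)

open Finset Function

/-! Applied with `m = N`, the cluster expansion writes `f` as a sum over subsets
`σ ⊆ {1, …, N-1}` of the terms `g^{|σ|+1}(x_0, x_σ)`. Distinct terms are orthogonal in `L²`:
if `j ∈ σ \ τ`, integrate first in `x_j`, which the `τ`-term does not see, while the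
`σ`-term has mean zero in each of its non-root variables. Since forgetting coordinates preserves
the product probability measure of the torus, Pythagoras gives
`‖f‖² = ∑_σ ‖g^{|σ|+1}‖²`, and there are `C(N-1, m-1)` subsets of size `m-1`. -/

instance AddCircle.isProbabilityMeasure_volume_one :
    IsProbabilityMeasure (volume : Measure (AddCircle (1 : ℝ))) :=
  ⟨UnitAddCircle.measure_univ⟩

theorem integral_sum_sq_of_orthogonal {α ι : Type*} [MeasurableSpace α] {μ : Measure α}
    {s : Finset ι} {u : ι → α → ℝ} (hu : ∀ i ∈ s, MemLp (u i) 2 μ)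
    (horth : ∀ i ∈ s, ∀ j ∈ s, i ≠ j → ∫ x, u i x * u j x ∂μ = 0) :
    ∫ x, (∑ i ∈ s, u i x) ^ 2 ∂μ = ∑ i ∈ s, ∫ x, u i x ^ 2 ∂μ := by
  have hint : ∀ i ∈ s, ∀ j ∈ s, Integrable (fun x => u i x * u j x) μ :=
    fun i hi j hj => (hu i hi).integrable_mul (hu j hj)
  calc ∫ x, (∑ i ∈ s, u i x) ^ 2 ∂μ = ∑ i ∈ s, ∑ j ∈ s, ∫ x, u i x * u j x ∂μ := by
        simp_rw [sq, sum_mul_sum]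
        rw [integral_finsetSum _ fun i hi => integrable_finsetSum _ (hint i hi)]
        exact sum_congr rfl fun i hi => integral_finsetSum _ (hint i hi)
    _ = ∑ i ∈ s, ∫ x, u i x ^ 2 ∂μ := by
        refine sum_congr rfl fun i hi => ?_
        rw [sum_eq_single_of_mem i hi fun j hj hji => horth i hi j hj hji.symm]
        simp_rw [sq]

section InjectiveRestriction

variable {X : Type*} [MeasureSpace X] [IsProbabilityMeasure (volume : Measure X)]
  {ι κ : Type*} [Fintype ι] [Fintype κ] {e : ι → κ}

theorem measurePreserving_comp_of_injective (he : Injective e) :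
    MeasurePreserving (fun x : κ → X => x ∘ e) volume volume := by
  have hmeas : Measurable (fun x : κ → X => x ∘ e) :=
    measurable_pi_lambda _ fun i => measurable_pi_apply (e i)
  refine ⟨hmeas, (Measure.pi_eq fun s hs => ?_).symm⟩
  have hpre : (fun x : κ → X => x ∘ e) ⁻¹' Set.univ.pi s =
      Set.univ.pi (extend e s fun _ => Set.univ) := by
    ext x
    simp only [Set.mem_preimage, Set.mem_univ_pi, comp_apply]
    refine ⟨fun hx k => ?_, fun hx i => by simpa [he.extend_apply] using hx (e i)⟩
    by_cases hk : ∃ i, e i = k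
    · obtain ⟨i, rfl⟩ := hk
      simpa [he.extend_apply] using hx i
    · simp [extend_apply' _ _ _ hk]
  rw [Measure.map_apply hmeas (.univ_pi hs), hpre, volume_pi, Measure.pi_pi]
  refine (Fintype.prod_of_injective e he _ _ (fun k hk => ?_) fun i => ?_).symm
  · simp [extend_apply' _ _ _ fun ⟨i, hi⟩ => hk ⟨i, hi⟩]
  · rw [he.extend_apply]

theorem integral_comp_of_injective (he : Injective e) {G : (ι → X) → ℝ}
    (hG : AEStronglyMeasurable G volume) :
    ∫ x : κ → X, G (x ∘ e) = ∫ y : ι → X, G y := by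
  have h := measurePreserving_comp_of_injective (X := X) he
  rw [← integral_map h.measurable.aemeasurable (h.map_eq ▸ hG), h.map_eq]

end InjectiveRestriction

theorem integral_eq_zero_of_integral_update_eq_zero {n : ℕ} {α : Fin (n + 1) → Type*}
    [∀ i, MeasurableSpace (α i)] {μ : ∀ i, Measure (α i)} [∀ i, SigmaFinite (μ i)]
    {E : Type*} [NormedAddCommGroup E] [NormedSpace ℝ E] {Φ : (∀ i, α i) → E}
    (hΦ : Integrable Φ (Measure.pi μ)) (j : Fin (n + 1))
    (h : ∀ x, ∫ b, Φ (update x j b) ∂μ j = 0) :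
    ∫ x, Φ x ∂Measure.pi μ = 0 := by
  have hmp := (measurePreserving_piFinSuccAbove μ j).symm
  have hΦ' := (hmp.integrable_comp_emb (MeasurableEquiv.measurableEmbedding _)).2 hΦ
  rw [← hmp.integral_comp (MeasurableEquiv.measurableEmbedding _),
    integral_prod_symm (fun p => Φ ((MeasurableEquiv.piFinSuccAbove α j).symm p)) hΦ']
  refine integral_eq_zero_of_ae (.of_forall fun w => ?_)
  rcases isEmpty_or_nonempty (α j) with _ | ⟨⟨b₀⟩⟩
  · exact integral_of_isEmpty
  · simpa [MeasurableEquiv.piFinSuccAbove_symm_apply, Fin.insertNthEquiv, Fin.update_insertNth]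
      using h (j.insertNth b₀ w)

theorem integral_mul_comp_eq_zero {X : Type*} [MeasureSpace X] [SigmaFinite (volume : Measure X)]
    {M m n : ℕ} {G : (Fin m → X) → ℝ} {H : (Fin n → X) → ℝ} {e : Fin m → Fin (M + 1)}
    {e' : Fin n → Fin (M + 1)} (he : Injective e)
    (hint : Integrable (fun x : Fin (M + 1) → X => G (x ∘ e) * H (x ∘ e')))
    {k : Fin m} (hG : ∀ y, ∫ b, G (update y k b) = 0) (hk : e k ∉ Set.range e') :
    ∫ x : Fin (M + 1) → X, G (x ∘ e) * H (x ∘ e') = 0 := by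
  refine integral_eq_zero_of_integral_update_eq_zero hint (e k) fun x => ?_
  have hupd_e : ∀ b, update x (e k) b ∘ e = update (x ∘ e) k b :=
    update_comp_eq_of_injective x he k
  have hupd_e' : ∀ b, update x (e k) b ∘ e' = x ∘ e' :=
    fun b => funext fun l => update_of_ne (fun h => hk ⟨l, h⟩) _ _
  simp only [hupd_e, hupd_e', integral_mul_const, hG, zero_mul]

section Selection

variable {m : ℕ} {σ : Finset (Fin (m + 1))}

def selEmb (h0 : (0 : Fin (m + 1)) ∉ σ) : Fin (#σ + 1) ↪o Fin (m + 1) :=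
  (insert 0 σ).orderEmbOfFin (card_insert_of_notMem h0)

theorem selVars_eq_comp_selEmb {X : Type*} (y : Fin (m + 1) → X) (h0 : (0 : Fin (m + 1)) ∉ σ) :
    selVars (n := #σ) y σ = y ∘ selEmb h0 := by
  funext j
  have hj : (j : ℕ) < ((insert 0 σ).sort (· ≤ ·)).length := by
    simpa [card_insert_of_notMem h0] using j.isLt
  simp [selVars, selEmb, orderEmbOfFin_apply, List.getElem?_eq_getElem hj]

theorem range_selEmb (h0 : (0 : Fin (m + 1)) ∉ σ) : Set.range (selEmb h0) = insert 0 σ := by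
  simp [selEmb]

theorem selEmb_zero (h0 : (0 : Fin (m + 1)) ∉ σ) : selEmb h0 0 = 0 := by
  obtain ⟨k, hk⟩ : (0 : Fin (m + 1)) ∈ Set.range (selEmb h0) := by simp [range_selEmb]
  exact le_antisymm (hk ▸ (selEmb h0).monotone (Fin.zero_le k)) (Fin.zero_le _)

end Selection

theorem sum_range_sum_powersetCard {α β : Type*} [AddCommMonoid β] {s : Finset α} {n : ℕ}
    (hs : #s = n) (F : ℕ → Finset α → β) :
    ∑ k ∈ range (n + 1), ∑ σ ∈ powersetCard k s, F k σ = ∑ σ ∈ s.powerset, F #σ σ := by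
  rw [sum_powerset, hs]
  refine sum_congr rfl fun k _ => sum_congr rfl fun σ hσ => ?_
  rw [(mem_powersetCard.1 hσ).2]

theorem glueVars_self {X : Type*} {N : ℕ} (y : Fin N → X) (z : Fin (N - N) → X) :
    glueVars N N le_rfl y z = y :=
  funext fun i => dif_pos i.isLt

section SelectedVariables

variable {X : Type*} [MeasureSpace X] {M : ℕ} {σ τ : Finset (Fin (M + 1))}

theorem memLp_comp_selVars [IsProbabilityMeasure (volume : Measure X)] {p : ENNReal}
    (h0 : (0 : Fin (M + 1)) ∉ σ) {G : (Fin (#σ + 1) → X) → ℝ} (hG : MemLp G p volume) :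
    MemLp (fun x : Fin (M + 1) → X => G (selVars x σ)) p volume := by
  simp_rw [selVars_eq_comp_selEmb _ h0]
  exact hG.comp_measurePreserving (measurePreserving_comp_of_injective (selEmb h0).injective)

theorem integral_comp_selVars [IsProbabilityMeasure (volume : Measure X)]
    (h0 : (0 : Fin (M + 1)) ∉ σ) {G : (Fin (#σ + 1) → X) → ℝ}
    (hG : AEStronglyMeasurable G volume) :
    ∫ x : Fin (M + 1) → X, G (selVars x σ) = ∫ y, G y := by
  simp_rw [selVars_eq_comp_selEmb _ h0]
  exact integral_comp_of_injective (selEmb h0).injective hG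

variable [SigmaFinite (volume : Measure X)] {G : (Fin (#σ + 1) → X) → ℝ}
  {H : (Fin (#τ + 1) → X) → ℝ}

theorem integral_mul_selVars_eq_zero (hσ : (0 : Fin (M + 1)) ∉ σ) (hτ : (0 : Fin (M + 1)) ∉ τ)
    (hint : Integrable (fun x : Fin (M + 1) → X => G (selVars x σ) * H (selVars x τ)))
    (hG : ∀ k ≠ 0, ∀ y, ∫ b, G (update y k b) = 0) {j : Fin (M + 1)} (hjσ : j ∈ σ)
    (hjτ : j ∉ τ) :
    ∫ x : Fin (M + 1) → X, G (selVars x σ) * H (selVars x τ) = 0 := by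
  obtain ⟨k, hk⟩ : j ∈ Set.range (selEmb hσ) := by
    simp [range_selEmb, hjσ]
  have hk0 : k ≠ 0 := by
    rintro rfl
    exact hσ (selEmb_zero hσ ▸ hk ▸ hjσ)
  have hj0 : j ≠ 0 := fun h => hσ (h ▸ hjσ)
  simp_rw [selVars_eq_comp_selEmb _ hσ, selVars_eq_comp_selEmb _ hτ] at hint ⊢
  exact integral_mul_comp_eq_zero (selEmb hσ).injective hint (hG k hk0)
    (by simp [range_selEmb, hk, hj0, hjτ])

theorem integral_mul_selVars_eq_zero_of_ne (hσ : (0 : Fin (M + 1)) ∉ σ)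
    (hτ : (0 : Fin (M + 1)) ∉ τ) (hne : σ ≠ τ)
    (hint : Integrable (fun x : Fin (M + 1) → X => G (selVars x σ) * H (selVars x τ)))
    (hG : ∀ k ≠ 0, ∀ y, ∫ b, G (update y k b) = 0)
    (hH : ∀ k ≠ 0, ∀ y, ∫ b, H (update y k b) = 0) :
    ∫ x : Fin (M + 1) → X, G (selVars x σ) * H (selVars x τ) = 0 := by
  by_cases hsub : σ ⊆ τ
  · obtain ⟨j, hjτ, hjσ⟩ := exists_of_ssubset (ssubset_of_subset_of_ne hsub hne)
    simp_rw [mul_comm (G _)] at hint ⊢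
    exact integral_mul_selVars_eq_zero hτ hσ hint hH hjτ hjσ
  · obtain ⟨j, hjσ, hjτ⟩ := not_subset.1 hsub
    exact integral_mul_selVars_eq_zero hσ hτ hint hG hjσ hjτ

end SelectedVariables

theorem cluster_expansion_norm_identity_general (d N : ℕ) (hN : 1 ≤ N)
    (f : (Fin N → Torus d) → ℝ)
    (g : (m' : ℕ) → (Fin (m' + 1) → Torus d) → ℝ)
    (hgL2 : ∀ m' : ℕ, m' + 1 ≤ N →
      MemLp (g m') 2 (volume : Measure (Fin (m' + 1) → Torus d)))
    (hgzero : ∀ m' : ℕ, m' + 1 ≤ N → ∀ j : Fin (m' + 1), j ≠ 0 →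
      ∀ y : Fin (m' + 1) → Torus d,
        (∫ x : Torus d, g m' (Function.update y j x)) = 0)
    (hcluster : ∀ m' : ℕ, ∀ hm : m' + 1 ≤ N, ∀ y : Fin (m' + 1) → Torus d,
      (∫ z : Fin (N - (m' + 1)) → Torus d, f (glueVars N (m' + 1) hm y z)) =
        ∑ n' ∈ Finset.range (m' + 1),
          ∑ σ ∈ Finset.powersetCard n' (Finset.univ.erase (0 : Fin (m' + 1))),
            g n' (selVars y σ)) :
    (∫ x : Fin N → Torus d, (f x) ^ 2) =
      ∑ m' ∈ Finset.range N,
        ((N - 1).choose m' : ℝ) * ∫ y : Fin (m' + 1) → Torus d, (g m' y) ^ 2 := by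
  obtain ⟨M, rfl⟩ : ∃ M, N = M + 1 := ⟨N - 1, by omega⟩
  have hcard : #(univ.erase (0 : Fin (M + 1))) = M := by simp
  set S := (univ.erase (0 : Fin (M + 1))).powerset
  have h0 : ∀ σ ∈ S, (0 : Fin (M + 1)) ∉ σ := fun σ hσ h => by simpa using mem_powerset.1 hσ h
  have hle : ∀ σ ∈ S, #σ + 1 ≤ M + 1 := fun σ hσ => by
    have := card_le_card (mem_powerset.1 hσ); omega
  have hf : ∀ x, f x = ∑ σ ∈ S, g #σ (selVars x σ) := fun x => by
    simpa [glueVars_self, sum_range_sum_powersetCard hcard] using hcluster M le_rfl x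
  have hmem : ∀ σ ∈ S, MemLp (fun x => g #σ (selVars x σ)) 2 volume :=
    fun σ hσ => memLp_comp_selVars (h0 σ hσ) (hgL2 _ (hle σ hσ))
  calc ∫ x, f x ^ 2 = ∫ x, (∑ σ ∈ S, g #σ (selVars x σ)) ^ 2 := by simp_rw [← hf]
    _ = ∑ σ ∈ S, ∫ x, g #σ (selVars x σ) ^ 2 :=
        integral_sum_sq_of_orthogonal hmem fun σ hσ τ hτ hne =>
          integral_mul_selVars_eq_zero_of_ne (h0 σ hσ) (h0 τ hτ) hne
            ((hmem σ hσ).integrable_mul (hmem τ hτ)) (hgzero _ (hle σ hσ)) (hgzero _ (hle τ hτ))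
    _ = ∑ σ ∈ S, ∫ y, g #σ y ^ 2 := sum_congr rfl fun σ hσ =>
        integral_comp_selVars (h0 σ hσ) (hgL2 _ (hle σ hσ)).integrable_sq.aestronglyMeasurable
    _ = _ := by
        rw [sum_powerset_apply_card (fun n => ∫ y, g n y ^ 2), hcard]
        simp [nsmul_eq_mul]

/-- Cluster expansion norm identity: if `f_N ∈ L²((𝕋^d)^N)` is symmetric in its last
`N-1` variables, and its marginals admit a cluster expansion into correlation functions
`g^m` (indexed here by `m'` with `m = m'+1`) which are symmetric in their last `m-1`
variables and integrate to zero in each of their last `m-1` variables, then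
`∫ |f_N|² = ∑_{m=1}^{N} C(N-1, m-1) ∫ |g^m|²`. -/
theorem cluster_expansion_norm_identity (d N : ℕ) (hN : 1 ≤ N)
    (f : (Fin N → Torus d) → ℝ)
    (g : (m' : ℕ) → (Fin (m' + 1) → Torus d) → ℝ)
    (hfsym : ∀ π : Equiv.Perm (Fin N), π ⟨0, hN⟩ = ⟨0, hN⟩ → ∀ x, f (x ∘ π) = f x)
    (hfL2 : MemLp f 2 (volume : Measure (Fin N → Torus d)))
    (hgL2 : ∀ m' : ℕ, m' + 1 ≤ N →
      MemLp (g m') 2 (volume : Measure (Fin (m' + 1) → Torus d)))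
    (hgsym : ∀ m' : ℕ, m' + 1 ≤ N → ∀ π : Equiv.Perm (Fin (m' + 1)), π 0 = 0 →
      ∀ y, g m' (y ∘ π) = g m' y)
    (hgzero : ∀ m' : ℕ, m' + 1 ≤ N → ∀ j : Fin (m' + 1), j ≠ 0 →
      ∀ y : Fin (m' + 1) → Torus d,
        (∫ x : Torus d, g m' (Function.update y j x)) = 0)
    (hcluster : ∀ m' : ℕ, ∀ hm : m' + 1 ≤ N, ∀ y : Fin (m' + 1) → Torus d,
      (∫ z : Fin (N - (m' + 1)) → Torus d, f (glueVars N (m' + 1) hm y z)) =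
        ∑ n' ∈ Finset.range (m' + 1),
          ∑ σ ∈ Finset.powersetCard n' (Finset.univ.erase (0 : Fin (m' + 1))),
            g n' (selVars y σ)) :
    (∫ x : Fin N → Torus d, (f x) ^ 2) =
      ∑ m' ∈ Finset.range N,
        ((N - 1).choose m' : ℝ) * ∫ y : Fin (m' + 1) → Torus d, (g m' y) ^ 2 :=
  cluster_expansion_norm_identity_general d N hN f g hgL2 hgzero hcluster
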